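/- Let tau > 0, omega_1(tau) the free-plate fundamental tone of a bounded domain Omega, mu_1 the first nonzero Neumann eigenvalue of Omega with eigenfunction v (so that ∫_Omega v = 0 and ∫ |Dv|^2 = mu_1 ∫ v^2), and C = ∫_Omega |D^2 v|^2 dx / ∫_Omega v^2 dx. Then mu_1 <= omega_1(tau)/tau <= mu_1 + C/tau, and hence omega_1(tau)/tau converges to mu_1 as tau -> ∞. -/

import Mathlib

open MeasureTheory Filter

/-- Squared Hilbert–Schmidt norm of the Hessian of `u` at `x`. -/
noncomputable def hessSq {d : ℕ} (u : EuclideanSpace ℝ (Fin d) → ℝ)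
    (x : EuclideanSpace ℝ (Fin d)) : ℝ :=
  ∑ i, ∑ j, (iteratedFDeriv ℝ 2 u x ![EuclideanSpace.single i 1, EuclideanSpace.single j 1])^2

/-- Squared Euclidean norm of the gradient of `u` at `x`. -/
noncomputable def gradSq {d : ℕ} (u : EuclideanSpace ℝ (Fin d) → ℝ)
    (x : EuclideanSpace ℝ (Fin d)) : ℝ :=
  ∑ i, (fderiv ℝ u x (EuclideanSpace.single i 1))^2

/-- Plate Rayleigh quotient values over mean-zero trial functions on `Ω`. -/
noncomputable def plateQuotients {d : ℕ} (τ : ℝ) (Ω : Set (EuclideanSpace ℝ (Fin d))) :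
    Set ℝ :=
  {q | ∃ u : EuclideanSpace ℝ (Fin d) → ℝ, ContDiff ℝ 2 u ∧
    (∫ x in Ω, u x) = 0 ∧ (0 < ∫ x in Ω, (u x)^2) ∧
    q = (∫ x in Ω, (hessSq u x + τ * gradSq u x)) / (∫ x in Ω, (u x)^2)}

/-- Membrane Rayleigh quotient values over mean-zero trial functions on `Ω`. -/
noncomputable def membraneQuotients {d : ℕ} (Ω : Set (EuclideanSpace ℝ (Fin d))) :
    Set ℝ :=
  {q | ∃ u : EuclideanSpace ℝ (Fin d) → ℝ, ContDiff ℝ 1 u ∧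
    (∫ x in Ω, u x) = 0 ∧ (0 < ∫ x in Ω, (u x)^2) ∧
    q = (∫ x in Ω, gradSq u x) / (∫ x in Ω, (u x)^2)}

/-
Every plate trial function is also a membrane trial function and the Hessian term is
nonnegative, so each plate quotient is at least `τ μ₁`. Testing the plate quotient with the
membrane eigenfunction `v` gives `ω₁(τ) ≤ C + τ μ₁`. Dividing by `τ` and squeezing yields the
limit.
-/

lemma hessSq_nonneg {d : ℕ} (u : EuclideanSpace ℝ (Fin d) → ℝ)
    (x : EuclideanSpace ℝ (Fin d)) : 0 ≤ hessSq u x :=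
  Finset.sum_nonneg fun _ _ => Finset.sum_nonneg fun _ _ => sq_nonneg _

lemma gradSq_nonneg {d : ℕ} (u : EuclideanSpace ℝ (Fin d) → ℝ)
    (x : EuclideanSpace ℝ (Fin d)) : 0 ≤ gradSq u x :=
  Finset.sum_nonneg fun _ _ => sq_nonneg _

lemma continuous_hessSq {d : ℕ} {u : EuclideanSpace ℝ (Fin d) → ℝ} (hu : ContDiff ℝ 2 u) :
    Continuous (hessSq u) :=
  continuous_finsetSum _ fun _ _ => continuous_finsetSum _ fun _ _ =>
    ((hu.continuous_iteratedFDeriv le_rfl).eval_const _).pow 2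

lemma continuous_gradSq {d : ℕ} {u : EuclideanSpace ℝ (Fin d) → ℝ} (hu : ContDiff ℝ 1 u) :
    Continuous (gradSq u) :=
  continuous_finsetSum _ fun _ _ =>
    ((hu.continuous_fderiv one_ne_zero).clm_apply continuous_const).pow 2

lemma Continuous.integrableOn_of_isBounded {X E : Type*} [MetricSpace X] [ProperSpace X]
    [MeasurableSpace X] [OpensMeasurableSpace X] [NormedAddCommGroup E] {μ : Measure X}
    [IsFiniteMeasureOnCompacts μ] {s : Set X} (hs : Bornology.IsBounded s) {f : X → E}
    (hf : Continuous f) : IntegrableOn f s μ :=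
  (hf.continuousOn.integrableOn_compact hs.isCompact_closure).mono_set subset_closure

section Quotients

variable {d : ℕ} {Ω : Set (EuclideanSpace ℝ (Fin d))}

lemma integral_hessSq_add_mul_gradSq (hΩ : Bornology.IsBounded Ω) (τ : ℝ)
    {u : EuclideanSpace ℝ (Fin d) → ℝ} (hu : ContDiff ℝ 2 u) :
    ∫ x in Ω, (hessSq u x + τ * gradSq u x) =
      (∫ x in Ω, hessSq u x) + τ * ∫ x in Ω, gradSq u x := by
  rw [integral_add ((continuous_hessSq hu).integrableOn_of_isBounded hΩ)
    (((continuous_gradSq (hu.of_le one_le_two)).integrableOn_of_isBounded hΩ).const_mul τ),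
    integral_const_mul]

lemma mem_plateQuotients (hΩ : Bornology.IsBounded Ω) (τ : ℝ)
    {u : EuclideanSpace ℝ (Fin d) → ℝ} (hu : ContDiff ℝ 2 u) (hmean : ∫ x in Ω, u x = 0)
    (hL2 : 0 < ∫ x in Ω, (u x)^2) :
    ((∫ x in Ω, hessSq u x) + τ * ∫ x in Ω, gradSq u x) / (∫ x in Ω, (u x)^2) ∈
      plateQuotients τ Ω :=
  ⟨u, hu, hmean, hL2, by rw [integral_hessSq_add_mul_gradSq hΩ τ hu]⟩

lemma bddBelow_membraneQuotients : BddBelow (membraneQuotients Ω) := by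
  refine ⟨0, ?_⟩
  rintro q ⟨u, -, -, hL2, rfl⟩
  exact div_nonneg (integral_nonneg (gradSq_nonneg u)) hL2.le

lemma bddBelow_plateQuotients {τ : ℝ} (hτ : 0 ≤ τ) : BddBelow (plateQuotients τ Ω) := by
  refine ⟨0, ?_⟩
  rintro q ⟨u, -, -, hL2, rfl⟩
  exact div_nonneg (integral_nonneg fun x =>
    add_nonneg (hessSq_nonneg u x) (mul_nonneg hτ (gradSq_nonneg u x))) hL2.le

lemma mul_sInf_membraneQuotients_le_sInf_plateQuotients (hΩ : Bornology.IsBounded Ω)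
    {τ : ℝ} (hτ : 0 ≤ τ) (hne : (plateQuotients τ Ω).Nonempty) :
    τ * sInf (membraneQuotients Ω) ≤ sInf (plateQuotients τ Ω) := by
  refine le_csInf hne ?_
  rintro q ⟨u, hu, hmean, hL2, rfl⟩
  set G := ∫ x in Ω, gradSq u x
  set S := ∫ x in Ω, (u x)^2
  have hmembrane : sInf (membraneQuotients Ω) ≤ G / S :=
    csInf_le bddBelow_membraneQuotients ⟨u, hu.of_le one_le_two, hmean, hL2, rfl⟩
  have hH : 0 ≤ ∫ x in Ω, hessSq u x := integral_nonneg (hessSq_nonneg u)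
  rw [integral_hessSq_add_mul_gradSq hΩ τ hu]
  calc τ * sInf (membraneQuotients Ω) ≤ τ * (G / S) := by gcongr
    _ = (τ * G) / S := by ring
    _ ≤ ((∫ x in Ω, hessSq u x) + τ * G) / S := by gcongr; linarith

end Quotients

lemma tendsto_of_le_of_le_add_div {f : ℝ → ℝ} {μ C : ℝ}
    (hf : ∀ τ, 0 < τ → μ ≤ f τ ∧ f τ ≤ μ + C / τ) : Tendsto f atTop (nhds μ) := by
  have hupper : Tendsto (fun τ : ℝ => μ + C / τ) atTop (nhds μ) := by
    simpa using (tendsto_const_nhds (x := μ)).add (tendsto_const_nhds.div_atTop tendsto_id)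
  refine tendsto_of_tendsto_of_tendsto_of_le_of_le' tendsto_const_nhds hupper ?_ ?_
  · filter_upwards [eventually_gt_atTop 0] with τ hτ using (hf τ hτ).1
  · filter_upwards [eventually_gt_atTop 0] with τ hτ using (hf τ hτ).2

theorem plate_tone_over_tau_to_membrane_general {d : ℕ}
    (Ω : Set (EuclideanSpace ℝ (Fin d))) (hΩb : Bornology.IsBounded Ω)
    (μ₁ : ℝ) (hμ₁ : μ₁ = sInf (membraneQuotients Ω))
    (v : EuclideanSpace ℝ (Fin d) → ℝ) (hv : ContDiff ℝ 2 v)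
    (hvmean : (∫ x in Ω, v x) = 0) (hvL2 : 0 < ∫ x in Ω, (v x)^2)
    (hveig : (∫ x in Ω, gradSq v x) = μ₁ * ∫ x in Ω, (v x)^2)
    (C : ℝ) (hC : C = (∫ x in Ω, hessSq v x) / (∫ x in Ω, (v x)^2)) :
    (∀ τ : ℝ, 0 < τ →
      μ₁ ≤ sInf (plateQuotients τ Ω) / τ ∧ sInf (plateQuotients τ Ω) / τ ≤ μ₁ + C / τ) ∧
    Tendsto (fun τ : ℝ => sInf (plateQuotients τ Ω) / τ) atTop (nhds μ₁) := by
  have bounds : ∀ τ : ℝ, 0 < τ →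
      μ₁ ≤ sInf (plateQuotients τ Ω) / τ ∧ sInf (plateQuotients τ Ω) / τ ≤ μ₁ + C / τ := by
    intro τ hτ
    have hv_mem := mem_plateQuotients hΩb τ hv hvmean hvL2
    have hlower : τ * μ₁ ≤ sInf (plateQuotients τ Ω) :=
      hμ₁ ▸ mul_sInf_membraneQuotients_le_sInf_plateQuotients hΩb hτ.le ⟨_, hv_mem⟩
    have hupper : sInf (plateQuotients τ Ω) ≤ C + τ * μ₁ := by
      refine (csInf_le (bddBelow_plateQuotients hτ.le) hv_mem).trans_eq ?_
      rw [hveig, hC]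
      field_simp
    constructor
    · rw [le_div_iff₀ hτ]; linarith
    · rw [div_le_iff₀ hτ, add_mul, div_mul_cancel₀ C hτ.ne']; linarith
  exact ⟨bounds, tendsto_of_le_of_le_add_div bounds⟩

/-- With `μ₁` the first nonzero Neumann eigenvalue, attained by an eigenfunction
`v ∈ H²(Ω)`, and `C = ∫|D²v|²/∫v²`, we have `μ₁ ≤ ω₁(τ)/τ ≤ μ₁ + C/τ` for all `τ > 0`,
and hence `ω₁(τ)/τ → μ₁` as `τ → ∞`. -/
theorem plate_tone_over_tau_to_membrane {d : ℕ}
    (Ω : Set (EuclideanSpace ℝ (Fin d))) (hΩ : IsOpen Ω) (hΩb : Bornology.IsBounded Ω)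
    (μ₁ : ℝ) (hμ₁ : μ₁ = sInf (membraneQuotients Ω))
    (v : EuclideanSpace ℝ (Fin d) → ℝ) (hv : ContDiff ℝ 2 v)
    (hvmean : (∫ x in Ω, v x) = 0) (hvL2 : 0 < ∫ x in Ω, (v x)^2)
    (hveig : (∫ x in Ω, gradSq v x) = μ₁ * ∫ x in Ω, (v x)^2)
    (C : ℝ) (hC : C = (∫ x in Ω, hessSq v x) / (∫ x in Ω, (v x)^2)) :
    (∀ τ : ℝ, 0 < τ →
      μ₁ ≤ sInf (plateQuotients τ Ω) / τ ∧ sInf (plateQuotients τ Ω) / τ ≤ μ₁ + C / τ) ∧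
    Tendsto (fun τ : ℝ => sInf (plateQuotients τ Ω) / τ) atTop (nhds μ₁) :=
  plate_tone_over_tau_to_membrane_general Ω hΩb μ₁ hμ₁ v hv hvmean hvL2 hveig C hC
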